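/- arXiv:1811.01235 — 2 statements merged into one kernel-verified Lean document; each statement's English description precedes it below -/
import Mathlib

section
/- Let (Λ, δ) be a population protocol with output state y and let (o_n)_{n∈ℕ} be an infinite nondecreasing sequence of stable configurations with Δ = bdd((o_n)) and Γ = Λ ∖ Δ. Then every configuration v ∈ ℕ^Λ such that the restriction of v to Δ is componentwise at most the restriction of o_n to Δ for some n ∈ ℕ is stable. In particular, every configuration v ∈ ℕ^Γ (i.e., with v(s) = 0 for all s ∈ Δ) is stable. -/
/-! Basic definitions for (leaderless) population protocols:
configurations, transitions, paths, reachability, bottlenecks, stability. -/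

namespace PP

variable {Λ : Type*}

open Classical in
/-- The configuration consisting of a single agent in state `s`. -/
noncomputable def single (s : Λ) : Λ → ℕ := fun t => if t = s then 1 else 0

/-- The configuration consisting of the two agents of the ordered pair `r`. -/
noncomputable def pairConf (r : Λ × Λ) : Λ → ℕ := single r.1 + single r.2

/-- The transition with input pair `r` is applicable to configuration `c`. -/
def Applicable (c : Λ → ℕ) (r : Λ × Λ) : Prop := pairConf r ≤ c

/-- The result of applying the transition with inputs `r` (and outputs `δ r`) to `c`. -/
noncomputable def applyTx (δ : Λ × Λ → Λ × Λ) (r : Λ × Λ) (c : Λ → ℕ) : Λ → ℕ :=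
  c - pairConf r + pairConf (δ r)

/-- `PathFrom δ c p c'`: executing the transition sequence `p` (each transition given
by its ordered pair of input states) from `c` is valid and ends in `c'`. -/
inductive PathFrom (δ : Λ × Λ → Λ × Λ) : (Λ → ℕ) → List (Λ × Λ) → (Λ → ℕ) → Prop
  | nil (c : Λ → ℕ) : PathFrom δ c [] c
  | cons {c c' : Λ → ℕ} (r : Λ × Λ) {p : List (Λ × Λ)} :
      Applicable c r → PathFrom δ (applyTx δ r c) p c' → PathFrom δ c (r :: p) c'

/-- `Reach δ c c'` means `c ⟹ c'`: some finite path leads from `c` to `c'`. -/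
def Reach (δ : Λ × Λ → Λ × Λ) (c c' : Λ → ℕ) : Prop := ∃ p, PathFrom δ c p c'

/-- `NoBottleneck δ b c p`: no transition of path `p` executed from `c` is a
`b`-bottleneck for the configuration to which it is applied. -/
inductive NoBottleneck (δ : Λ × Λ → Λ × Λ) (b : ℕ) : (Λ → ℕ) → List (Λ × Λ) → Prop
  | nil (c : Λ → ℕ) : NoBottleneck δ b c []
  | cons {c : Λ → ℕ} (r : Λ × Λ) {p : List (Λ × Λ)} :
      ¬(c r.1 ≤ b ∧ c r.2 ≤ b) → NoBottleneck δ b (applyTx δ r c) p →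
      NoBottleneck δ b c (r :: p)

/-- A configuration is stable w.r.t. output state `y` if the count of `y` can never
change again. -/
def Stable (δ : Λ × Λ → Λ × Λ) (y : Λ) (o : Λ → ℕ) : Prop :=
  ∀ o', Reach δ o o' → o' y = o y

/-- The transition function is symmetric. -/
def Symmetric (δ : Λ × Λ → Λ × Λ) : Prop :=
  ∀ r1 r2 : Λ, δ (r2, r1) = ((δ (r1, r2)).2, (δ (r1, r2)).1)

end PP

/-!
Stability is downward closed: a path from `v` is also a path from `v + e`, and it changes the
count of `y` by the same amount. For a state outside `Δ` the counts `o n s` are unbounded, so any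
`v` dominated by some `o n` on `Δ` is dominated by some `o n` everywhere (finitely many states, and
`o` is monotone), hence is stable.
-/

namespace PP

variable {Λ : Type*} {δ : Λ × Λ → Λ × Λ}

theorem PathFrom.add_right (e : Λ → ℕ) {c c' : Λ → ℕ} {p : List (Λ × Λ)}
    (h : PathFrom δ c p c') : PathFrom δ (c + e) p (c' + e) := by
  induction h with
  | nil c => exact .nil _
  | @cons c c' r p happ _ ih =>
    refine .cons r (happ.trans le_self_add) ?_
    have happly : applyTx δ r (c + e) = applyTx δ r c + e := by
      funext s
      have : pairConf r s ≤ c s := happ s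
      simp only [applyTx, Pi.add_apply, Pi.sub_apply]
      omega
    rwa [happly]

theorem Reach.add_right (e : Λ → ℕ) {c c' : Λ → ℕ} (h : Reach δ c c') :
    Reach δ (c + e) (c' + e) :=
  h.imp fun _ hp => hp.add_right e

theorem Stable.of_le {y : Λ} {o v : Λ → ℕ} (ho : Stable δ y o) (hv : v ≤ o) :
    Stable δ y v := by
  intro v' hreach
  obtain ⟨e, rfl⟩ := exists_add_of_le hv
  simpa using ho _ (hreach.add_right e)

end PP

theorem Monotone.exists_le_of_forall_exists_le {ι α β : Type*} [Finite ι] [Preorder α]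
    [Preorder β] [IsDirectedOrder β] [Nonempty β] {o : β → ι → α} (ho : Monotone o)
    {v : ι → α} (h : ∀ i, ∃ n, v i ≤ o n i) : ∃ m, v ≤ o m := by
  choose n hn using h
  obtain ⟨m, hm⟩ := Finite.exists_le n
  exact ⟨m, fun i => (hn i).trans (ho (hm i) i)⟩

/-- If `(o_n)` is an infinite nondecreasing sequence of stable configurations and
`Δ = bdd((o_n))`, then every configuration `v` whose restriction to `Δ` is at most
that of some `o_n` is stable; in particular every `v ∈ ℕ^Γ` (zero on `Δ`) is stable. -/
theorem stmt5 {Λ : Type*} [Fintype Λ] (δ : Λ × Λ → Λ × Λ) (y : Λ)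
    (o : ℕ → Λ → ℕ) (hmono : Monotone o) (hst : ∀ n, PP.Stable δ y (o n))
    (Δ : Set Λ) (hΔ : ∀ s : Λ, s ∈ Δ ↔ ∃ B : ℕ, ∀ n, o n s < B) :
    (∀ v : Λ → ℕ, (∃ n, ∀ s ∈ Δ, v s ≤ o n s) → PP.Stable δ y v) ∧
    (∀ v : Λ → ℕ, (∀ s ∈ Δ, v s = 0) → PP.Stable δ y v) := by
  have main : ∀ v : Λ → ℕ, (∃ n, ∀ s ∈ Δ, v s ≤ o n s) → PP.Stable δ y v := by
    rintro v ⟨n, hv⟩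
    have hdominated : ∀ s, ∃ m, v s ≤ o m s := by
      intro s
      by_cases hs : s ∈ Δ
      · exact ⟨n, hv s hs⟩
      · simp only [hΔ s, not_exists, not_forall, not_lt] at hs
        exact hs (v s)
    obtain ⟨m, hm⟩ := hmono.exists_le_of_forall_exists_le hdominated
    exact (hst m).of_le hm
  exact ⟨main, fun v hv => main v ⟨0, fun s hs => (hv s hs).trans_le (Nat.zero_le _)⟩⟩
end

section
/- Let f : ℕ^k → ℕ be a ℚ≥0-linear function, i.e., f(m) = Σ_{i=1}^k ⌊ci·m(i)⌋ for constants c1,…,ck ∈ ℚ with ci ≥ 0. Let E : ℕ → ℕ be the identity function. Then there exists a function-approximating leaderless population protocol A = (Λ, δ, Σ, y, q, a) that stably E-approximates f: there exist a0 ∈ ℕ and a linearly bounded function q0 : ℕ^{k+1} → ℕ such that for every initial configuration i ∈ ℕ^Λ with i restricted to Σ equal to m, i(a) ≥ a0, i(q) ≥ q0(m, i(a)), and i(s) = 0 for all s ∈ Λ ∖ (Σ ∪ {q, a}), every configuration c reachable from i can reach a stable configuration o with |o(y) − f(m)| ≤ i(a). -/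
open Finset

/-!
Write `cᵢ = nᵢ / dᵢ`. Each input agent of coordinate `i` becomes a token of value `nᵢ`. A token
of value at least `dᵢ` hands `dᵢ` of its value to a quiescent agent, which becomes an output
agent, and two small tokens of the same coordinate merge, freeing a quiescent agent. The value
held by coordinate `i` plus `dᵢ` times its number of outputs stays `nᵢ mᵢ`, so once every
coordinate holds at most one active token, of value below `dᵢ`, there are exactly
`Σ ⌊nᵢ mᵢ / dᵢ⌋` output agents and no rule can change that. Such a configuration is reachable
from anywhere: emissions and merges decrease the total of `value + 1` over all tokens, and
`Σ nᵢ mᵢ` quiescent agents are enough fuel. The approximation agents never interact, so the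
output is exact.
-/

namespace PP

variable {Λ : Type*} {δ : Λ × Λ → Λ × Λ} {c c' c'' : Λ → ℕ}

theorem Reach.refl (δ : Λ × Λ → Λ × Λ) (c : Λ → ℕ) : Reach δ c c := ⟨[], .nil c⟩

theorem PathFrom.append {p p' : List (Λ × Λ)} (h : PathFrom δ c p c')
    (h' : PathFrom δ c' p' c'') : PathFrom δ c (p ++ p') c'' := by
  induction h with
  | nil => exact h'
  | cons r hr _ ih => exact .cons r hr (ih h')

theorem Reach.trans (h : Reach δ c c') (h' : Reach δ c' c'') : Reach δ c c'' :=
  let ⟨p, hp⟩ := h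
  let ⟨p', hp'⟩ := h'
  ⟨p ++ p', hp.append hp'⟩

theorem Reach.single {r : Λ × Λ} (h : Applicable c r) : Reach δ c (applyTx δ r c) :=
  ⟨[r], .cons r h (.nil _)⟩

theorem Reach.invariant {P : (Λ → ℕ) → Prop}
    (hP : ∀ c r, Applicable c r → P c → P (applyTx δ r c)) (h : Reach δ c c') (hc : P c) :
    P c' := by
  obtain ⟨p, hp⟩ := h
  induction hp with
  | nil => exact hc
  | cons r hr _ ih => exact ih (hP _ r hr hc)

theorem Reach.exists_of_descent {P T : (Λ → ℕ) → Prop} (μ : (Λ → ℕ) → ℕ)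
    (h : ∀ c, P c → ¬ T c → ∃ c', Reach δ c c' ∧ P c' ∧ μ c' < μ c) (hc : P c) :
    ∃ o, Reach δ c o ∧ P o ∧ T o := by
  induction hμ : μ c using Nat.strong_induction_on generalizing c with
  | _ M ih =>
    by_cases hT : T c
    · exact ⟨c, .refl δ c, hc, hT⟩
    obtain ⟨c', hcc', hc', hlt⟩ := h c hc hT
    obtain ⟨o, hc'o, ho⟩ := ih _ (hμ ▸ hlt) hc' rfl
    exact ⟨o, hcc'.trans hc'o, ho⟩

open Classical in
theorem pairConf_apply (r : Λ × Λ) (s : Λ) :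
    pairConf r s = (if s = r.1 then 1 else 0) + (if s = r.2 then 1 else 0) := by
  simp [pairConf, single]

theorem pairConf_swap (r : Λ × Λ) : pairConf r.swap = pairConf r := by
  funext s
  simp only [pairConf_apply, Prod.fst_swap, Prod.snd_swap]
  omega

theorem applicable_pair {x y : Λ} (hxy : x ≠ y) (hx : 0 < c x) (hy : 0 < c y) :
    Applicable c (x, y) := by
  intro s
  rw [pairConf_apply]
  split_ifs with h₁ h₂ h₂
  · exact absurd (h₁.symm.trans h₂) hxy
  · exact h₁ ▸ hx
  · exact h₂ ▸ hy
  · exact Nat.zero_le _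

theorem applyTx_add_pairConf {r : Λ × Λ} (h : Applicable c r) :
    applyTx δ r c + pairConf r = c + pairConf (δ r) := by
  funext s
  have : pairConf r s ≤ c s := h s
  simp only [applyTx, Pi.add_apply, Pi.sub_apply]
  omega

section Weights

variable [Fintype Λ] (ω : Λ → ℕ)

theorem dotProduct_pairConf (r : Λ × Λ) : ω ⬝ᵥ pairConf r = ω r.1 + ω r.2 := by
  classical
  have hsingle (s : Λ) : single s = Pi.single s 1 := by
    funext t; simp [single, Pi.single_apply]
  simp [pairConf, dotProduct_add, hsingle, dotProduct_single]

theorem le_dotProduct_of_applicable {x y : Λ} (h : Applicable c (x, y)) :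
    ω x + ω y ≤ ω ⬝ᵥ c := by
  simpa only [dotProduct_pairConf] using
    dotProduct_le_dotProduct_of_nonneg_left h (fun _ => Nat.zero_le _)

theorem le_dotProduct_of_pos {x : Λ} (hx : 0 < c x) : ω x ≤ ω ⬝ᵥ c :=
  calc ω x ≤ ω x * c x := Nat.le_mul_of_pos_right _ hx
    _ ≤ ω ⬝ᵥ c := Finset.single_le_sum (f := fun s => ω s * c s) (fun _ _ => Nat.zero_le _)
        (Finset.mem_univ x)

theorem dotProduct_of_add_pairConf {x y : Λ} {p : Λ × Λ}
    (h : c' + pairConf (x, y) = c + pairConf p) :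
    ω ⬝ᵥ c' + (ω x + ω y) = ω ⬝ᵥ c + (ω p.1 + ω p.2) := by
  simpa only [dotProduct_add, dotProduct_pairConf] using congrArg (ω ⬝ᵥ ·) h

theorem exists_pos_of_dotProduct_pos (h : 0 < ω ⬝ᵥ c) : ∃ s, 0 < ω s ∧ 0 < c s := by
  obtain ⟨s, -, hs⟩ := Finset.exists_ne_zero_of_sum_ne_zero h.ne'
  exact ⟨s, Nat.pos_of_ne_zero (left_ne_zero_of_mul hs),
    Nat.pos_of_ne_zero (right_ne_zero_of_mul hs)⟩

end Weights

section Rules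

variable {R : Λ → Λ → Λ × Λ → Prop}

open Classical in
/-- `R x y p` reads "agents in states `x` and `y` turn into `p`". -/
noncomputable def ofRules (R : Λ → Λ → Λ × Λ → Prop) (r : Λ × Λ) : Λ × Λ :=
  if h : ∃ p, R r.1 r.2 p then h.choose
  else if h' : ∃ p, R r.2 r.1 p then h'.choose.swap else r

theorem symmetric_ofRules (hR : ∀ x y p p', R x y p → ¬ R y x p') : Symmetric (ofRules R) := by
  intro x y
  by_cases h : ∃ p, R x y p
  · have h' : ¬ ∃ p, R y x p := fun ⟨p', hp'⟩ => hR _ _ _ _ h.choose_spec hp'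
    simp only [ofRules, dif_pos h, dif_neg h']
    rfl
  · by_cases h' : ∃ p, R y x p <;> simp [ofRules, h, h']

theorem ofRules_eq (hR : ∀ x y p p', R x y p → R x y p' → p = p') {x y : Λ} {p : Λ × Λ}
    (h : R x y p) : ofRules R (x, y) = p := by
  have he : ∃ p, R x y p := ⟨p, h⟩
  simp only [ofRules, dif_pos he]
  exact hR _ _ _ _ he.choose_spec h

theorem reach_ofRules (hR : ∀ x y p p', R x y p → R x y p' → p = p') {x y : Λ}
    {p : Λ × Λ} (h : R x y p) (hc : Applicable c (x, y)) :
    ∃ c', Reach (ofRules R) c c' ∧ c' + pairConf (x, y) = c + pairConf p :=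
  ⟨_, .single hc, by rw [applyTx_add_pairConf hc, ofRules_eq hR h]⟩

theorem Reach.invariant_ofRules {P : (Λ → ℕ) → Prop}
    (hP : ∀ c c' x y p, R x y p → Applicable c (x, y) →
      c' + pairConf (x, y) = c + pairConf p → P c → P c')
    (h : Reach (ofRules R) c c') (hc : P c) : P c' := by
  refine h.invariant (fun c r hr hPc => ?_) hc
  have hstep := applyTx_add_pairConf (δ := ofRules R) hr
  by_cases h₁ : ∃ p, R r.1 r.2 p
  · simp only [ofRules, dif_pos h₁] at hstep
    exact hP c _ r.1 r.2 _ h₁.choose_spec hr hstep hPc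
  by_cases h₂ : ∃ p, R r.2 r.1 p
  · replace hstep : applyTx (ofRules R) r c + pairConf r.swap = c + pairConf h₂.choose := by
      simpa only [ofRules, dif_neg h₁, dif_pos h₂, pairConf_swap] using hstep
    have hr' : Applicable c r.swap := by rwa [Applicable, pairConf_swap]
    exact hP c _ r.2 r.1 _ h₂.choose_spec hr' hstep hPc
  · simp only [ofRules, dif_neg h₁, dif_neg h₂, add_left_inj] at hstep
    rwa [hstep]

end Rules

end PP

namespace FloorProtocol

open PP

inductive State (k B : ℕ) : Type
  | token (i : Fin k) (v : Fin (B + 1)) (charged : Bool)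
  | quiescent
  | approx
  | output
  deriving DecidableEq, Fintype

variable {k B : ℕ} (d : Fin k → ℕ)

/-- A symmetric transition function cannot turn two agents in the same state into two different
states, so a merge needs one charged and one uncharged token; quiescent agents flip charges. -/
inductive Rule : State k B → State k B → State k B × State k B → Prop
  | emit (i : Fin k) (v : Fin (B + 1)) (b : Bool) (hv : d i ≤ v) :
      Rule (.token i v b) .quiescent
        (.token i ⟨v - d i, (Nat.sub_le _ _).trans_lt v.isLt⟩ b, .output)
  | flip (i : Fin k) (v : Fin (B + 1)) (b : Bool) (hv : v < d i) :
      Rule (.token i v b) .quiescent (.token i v !b, .quiescent)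
  | merge (i : Fin k) (s t : Fin (B + 1)) (hs : 0 < (s : ℕ)) (ht : 0 < (t : ℕ))
      (hst : (s : ℕ) + t < B + 1) :
      Rule (.token i s true) (.token i t false) (.token i ⟨s + t, hst⟩ false, .quiescent)

theorem Rule.functional :
    ∀ x y p p', Rule (B := B) d x y p → Rule d x y p' → p = p' := by
  intro x y p p' h h'
  cases h <;> cases h' <;> first | rfl | omega

theorem Rule.not_swap : ∀ x y p p', Rule (B := B) d x y p → ¬ Rule d y x p' := by
  intro x y p p' h h'
  cases h <;> cases h'

def value (i : Fin k) : State k B → ℕ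
  | .token j v _ => if j = i then v else 0
  | _ => 0

def heavy (i : Fin k) : State k B → ℕ
  | .token j v _ => if j = i ∧ d i ≤ v then 1 else 0
  | _ => 0

def active (i : Fin k) (b : Bool) : State k B → ℕ
  | .token j v b' => if j = i ∧ b' = b ∧ 0 < (v : ℕ) then 1 else 0
  | _ => 0

def size : State k B → ℕ
  | .token _ v _ => v + 1
  | _ => 0

/-- `E i` counts the output agents paid out by coordinate `i`, whose initial total value is
`N i`. -/
def Invariant (N : Fin k → ℕ) (c : State k B → ℕ) : Prop :=
  ∃ E : Fin k → ℕ, (∀ i, value i ⬝ᵥ c + d i * E i = N i) ∧ c .output = ∑ i, E i ∧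
    ∑ i, N i ≤ c .quiescent + c .output

def Terminal (c : State k B → ℕ) : Prop :=
  ∀ i, heavy d i ⬝ᵥ c = 0 ∧ active i true ⬝ᵥ c + active i false ⬝ᵥ c ≤ 1

variable {d} {N : Fin k → ℕ} {c c' : State k B → ℕ}

theorem Invariant.fire {x y : State k B} {p : State k B × State k B} (hR : Rule d x y p)
    (h : c' + pairConf (x, y) = c + pairConf p) (hI : Invariant d N c) : Invariant d N c' := by
  obtain ⟨E, hval, hout, hfuel⟩ := hI
  have hv (i : Fin k) := dotProduct_of_add_pairConf (value i) h
  have hq := congrFun h .quiescent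
  have ho := congrFun h .output
  cases hR <;>
    simp only [Pi.add_apply, pairConf_apply, reduceCtorEq, ↓reduceIte, zero_add, add_zero,
      Nat.add_right_cancel_iff] at hq ho
  case emit i v b hv' =>
    refine ⟨Function.update E i (E i + 1), fun j => ?_, ?_, by omega⟩
    · have hvj := hv j
      by_cases hj : j = i
      · subst hj
        simp only [value, if_true, add_zero] at hvj
        rw [Function.update_self, mul_add_one]
        have := hval j
        omega
      · simp only [value, Ne.symm hj, if_false, add_zero] at hvj
        rw [Function.update_of_ne hj]
        have := hval j
        omega
    · rw [Finset.sum_update_of_mem (Finset.mem_univ i)]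
      rw [Finset.sum_eq_add_sum_sdiff_singleton_of_mem (Finset.mem_univ i) E] at hout
      omega
  case flip | merge =>
    refine ⟨E, fun j => ?_, by omega, by omega⟩
    have hvj := hv j
    simp only [value, add_zero] at hvj
    have := hval j
    split_ifs at hvj <;> omega

theorem Invariant.reach (h : Reach (ofRules (Rule d)) c c') (hI : Invariant d N c) :
    Invariant d N c' :=
  h.invariant_ofRules (fun _ _ _ _ _ hR _ h hI => hI.fire hR h) hI

theorem Invariant.initial {v : Fin k → Fin (B + 1)} {m : Fin k → ℕ}
    (hin : ∀ j, c (.token j (v j) false) = m j)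
    (hzero : ∀ s, s ∉ Set.range (fun j => State.token j (v j) false) → s ≠ .quiescent →
      s ≠ .approx → c s = 0)
    (hq : ∑ i, (v i : ℕ) * m i ≤ c .quiescent) :
    Invariant d (fun i => v i * m i) c := by
  have hout : c .output = 0 := hzero _ (by simp) (by simp) (by simp)
  refine ⟨0, fun i => ?_, by simp [hout], by simpa [hout] using hq⟩
  rw [Pi.zero_apply, mul_zero, add_zero, dotProduct,
    Finset.sum_eq_single (State.token i (v i) false)]
  · simp [value, hin]
  · intro s _ hs
    rcases s with ⟨j, w, b⟩ | _ | _ | _ <;> simp only [value, zero_mul]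
    split_ifs with hj
    · subst hj
      rw [hzero _ _ (by simp) (by simp), mul_zero]
      rintro ⟨j', hj'⟩
      simp only [State.token.injEq] at hj'
      obtain ⟨rfl, rfl, rfl⟩ := hj'
      exact hs rfl
    · exact zero_mul _
  · simp

theorem Terminal.fire {x y : State k B} {p : State k B × State k B} (hR : Rule d x y p)
    (hc : Applicable c (x, y)) (h : c' + pairConf (x, y) = c + pairConf p)
    (hT : Terminal d c) : Terminal d c' ∧ c' .output = c .output := by
  cases hR with
  | emit i v b hv =>
    have := le_dotProduct_of_applicable (heavy d i) hc
    simp [heavy, hv, (hT i).1] at this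
  | flip i v b hv =>
    refine ⟨fun j => ⟨?_, ?_⟩, ?_⟩
    · have h₁ := dotProduct_of_add_pairConf (heavy d j) h
      simp only [heavy] at h₁
      have := (hT j).1
      omega
    · have h₁ := dotProduct_of_add_pairConf (active j true) h
      have h₂ := dotProduct_of_add_pairConf (active j false) h
      have := (hT j).2
      cases b <;>
        simp only [active, Bool.not_false, Bool.not_true, Bool.false_eq_true,
          Bool.true_eq_false, true_and, false_and, and_false, ↓reduceIte, add_zero] at h₁ h₂ <;>
        omega
    · simpa [pairConf_apply] using congrFun h .output
  | merge i s t hs ht hst =>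
    have h₁ := le_dotProduct_of_applicable (active i true) hc
    have h₂ := le_dotProduct_of_applicable (active i false) hc
    have := (hT i).2
    simp only [active, hs, ht, Bool.false_eq_true, Bool.true_eq_false, and_true, and_false,
      and_self, ↓reduceIte, add_zero, zero_add] at h₁ h₂
    omega

theorem Terminal.stable {o : State k B → ℕ} (hT : Terminal d o) :
    Stable (ofRules (Rule d)) .output o := fun _ h =>
  (h.invariant_ofRules (P := fun c => Terminal d c ∧ c .output = o .output)
    (fun _ _ _ _ _ hR hc h ⟨hT, ho⟩ => let ⟨hT', ho'⟩ := hT.fire hR hc h; ⟨hT', ho'.trans ho⟩)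
    ⟨hT, rfl⟩).2

theorem value_le_of_heavy_eq_zero {i : Fin k} {s : State k B} (hs : heavy d i s = 0) :
    value i s ≤ (d i - 1) * (active i true s + active i false s) := by
  rcases s with ⟨j, v, b⟩ | _ | _ | _
  · by_cases hj : j = i
    · subst hj
      have hv : (v : ℕ) < d j := by simpa [heavy] using hs
      rcases Nat.eq_zero_or_pos (v : ℕ) with hv0 | hv0
      · simp [value, hv0]
      · cases b <;>
          simp only [value, active, hv0, Bool.false_eq_true, Bool.true_eq_false, and_true,
            and_false, and_self, ↓reduceIte, add_zero, zero_add, mul_one] <;>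
          omega
    · simp [value, hj]
  all_goals simp [value]

theorem value_dotProduct_le {i : Fin k} (hh : heavy d i ⬝ᵥ c = 0) :
    value i ⬝ᵥ c ≤ (d i - 1) * (active i true ⬝ᵥ c + active i false ⬝ᵥ c) := by
  rw [← add_dotProduct, dotProduct, dotProduct, Finset.mul_sum]
  refine Finset.sum_le_sum fun s _ => ?_
  rcases (c s).eq_zero_or_pos with h0 | hpos
  · simp [h0]
  have hs : heavy d i s = 0 :=
    Nat.eq_zero_of_le_zero (hh ▸ le_dotProduct_of_pos (heavy d i) hpos)
  rw [← mul_assoc]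
  exact Nat.mul_le_mul_right _ (value_le_of_heavy_eq_zero hs)

theorem Terminal.output_eq (hd : ∀ i, 0 < d i) (hT : Terminal d c) (hI : Invariant d N c) :
    c .output = ∑ i, N i / d i := by
  obtain ⟨E, hval, hout, -⟩ := hI
  rw [hout]
  refine Finset.sum_congr rfl fun i _ => ?_
  have hlt : value i ⬝ᵥ c < d i := by
    have := (value_dotProduct_le (hT i).1).trans (Nat.mul_le_mul_left _ (hT i).2)
    have := hd i
    omega
  rw [← hval i, Nat.add_mul_div_left _ _ (hd i), Nat.div_eq_of_lt hlt, zero_add]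

theorem Invariant.quiescent_pos (hd : ∀ i, 0 < d i) (hI : Invariant d N c) {i : Fin k}
    {v : Fin (B + 1)} {b : Bool} (hv : 0 < (v : ℕ)) (hx : 0 < c (.token i v b)) :
    0 < c .quiescent := by
  obtain ⟨E, hval, hout, hfuel⟩ := hI
  have hle (j : Fin k) : E j ≤ N j :=
    (Nat.le_mul_of_pos_left _ (hd j)).trans (hval j ▸ le_add_self)
  have hlt : E i < N i := by
    have := le_dotProduct_of_pos (value i) hx
    simp only [value, if_pos] at this
    have := hval i
    have := Nat.le_mul_of_pos_left (E i) (hd i)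
    omega
  have := Finset.sum_lt_sum (fun j _ => hle j) ⟨i, Finset.mem_univ i, hlt⟩
  omega

theorem Invariant.exists_fire (hI : Invariant d N c) {x y : State k B}
    {p : State k B × State k B} (hR : Rule d x y p) (hc : Applicable c (x, y)) :
    ∃ c', Reach (ofRules (Rule d)) c c' ∧ Invariant d N c' ∧
      ∀ ω : State k B → ℕ, ω ⬝ᵥ c' + (ω x + ω y) = ω ⬝ᵥ c + (ω p.1 + ω p.2) :=
  let ⟨c', hcc', h⟩ := reach_ofRules (Rule.functional d) hR hc
  ⟨c', hcc', hI.fire hR h, fun ω => dotProduct_of_add_pairConf ω h⟩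

theorem lt_of_heavy_eq_zero {i : Fin k} {v : Fin (B + 1)} {b : Bool}
    (hh : heavy d i ⬝ᵥ c = 0) (hx : 0 < c (.token i v b)) : (v : ℕ) < d i := by
  have := hh ▸ le_dotProduct_of_pos (heavy d i) hx
  simpa [heavy] using this

theorem exists_token_of_heavy_pos {i : Fin k} (hh : 0 < heavy d i ⬝ᵥ c) :
    ∃ (v : Fin (B + 1)) (b : Bool), d i ≤ v ∧ 0 < c (.token i v b) := by
  obtain ⟨s, hs, hx⟩ := exists_pos_of_dotProduct_pos _ hh
  rcases s with ⟨j, v, b⟩ | _ | _ | _ <;> simp only [heavy, lt_self_iff_false] at hs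
  split_ifs at hs with h
  · obtain ⟨rfl, hv⟩ := h
    exact ⟨v, b, hv, hx⟩
  · exact absurd hs (lt_irrefl 0)

theorem exists_token_of_active_pos {i : Fin k} {b : Bool} (ha : 0 < active i b ⬝ᵥ c) :
    ∃ v : Fin (B + 1), 0 < (v : ℕ) ∧ 0 < c (.token i v b) := by
  obtain ⟨s, hs, hx⟩ := exists_pos_of_dotProduct_pos _ ha
  rcases s with ⟨j, v, b'⟩ | _ | _ | _ <;> simp only [active, lt_self_iff_false] at hs
  split_ifs at hs with h
  · obtain ⟨rfl, rfl, hv⟩ := h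
    exact ⟨v, hv, hx⟩
  · exact absurd hs (lt_irrefl 0)

theorem Invariant.exists_emit (hd : ∀ i, 0 < d i) (hI : Invariant d N c) {i : Fin k}
    (hh : 0 < heavy d i ⬝ᵥ c) :
    ∃ c', Reach (ofRules (Rule d)) c c' ∧ Invariant d N c' ∧ size ⬝ᵥ c' < size ⬝ᵥ c := by
  obtain ⟨v, b, hv, hx⟩ := exists_token_of_heavy_pos hh
  have hdi := hd i
  have hq := hI.quiescent_pos hd (by omega) hx
  obtain ⟨c', hcc', hI', hw⟩ := hI.exists_fire (.emit i v b hv) (applicable_pair (by simp) hx hq)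
  refine ⟨c', hcc', hI', ?_⟩
  have := hw size
  simp only [size] at this
  omega

theorem Invariant.exists_merge (hI : Invariant d N c) {i : Fin k} (hB : 2 * d i ≤ B)
    (hh : heavy d i ⬝ᵥ c = 0) (htrue : 0 < active i true ⬝ᵥ c)
    (hfalse : 0 < active i false ⬝ᵥ c) :
    ∃ c', Reach (ofRules (Rule d)) c c' ∧ Invariant d N c' ∧ size ⬝ᵥ c' < size ⬝ᵥ c := by
  obtain ⟨s, hs, hx⟩ := exists_token_of_active_pos htrue
  obtain ⟨t, ht, hy⟩ := exists_token_of_active_pos hfalse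
  have hst : (s : ℕ) + t < B + 1 := by
    have := lt_of_heavy_eq_zero hh hx
    have := lt_of_heavy_eq_zero hh hy
    omega
  obtain ⟨c', hcc', hI', hw⟩ :=
    hI.exists_fire (.merge i s t hs ht hst) (applicable_pair (by simp) hx hy)
  refine ⟨c', hcc', hI', ?_⟩
  have := hw size
  simp only [size] at this
  omega

theorem Invariant.exists_flip (hd : ∀ i, 0 < d i) (hI : Invariant d N c) {i : Fin k}
    {b : Bool} (hh : heavy d i ⬝ᵥ c = 0) (hb : 2 ≤ active i b ⬝ᵥ c) :
    ∃ c', Reach (ofRules (Rule d)) c c' ∧ Invariant d N c' ∧ heavy d i ⬝ᵥ c' = 0 ∧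
      size ⬝ᵥ c' = size ⬝ᵥ c ∧ 0 < active i true ⬝ᵥ c' ∧ 0 < active i false ⬝ᵥ c' := by
  obtain ⟨v, hv, hx⟩ := exists_token_of_active_pos (lt_of_lt_of_le two_pos hb)
  have hq := hI.quiescent_pos hd hv hx
  obtain ⟨c', hcc', hI', hw⟩ := hI.exists_fire (.flip i v b (lt_of_heavy_eq_zero hh hx))
    (applicable_pair (by simp) hx hq)
  refine ⟨c', hcc', hI', ?_, ?_, ?_⟩
  · have := hw (heavy d i)
    simp only [heavy] at this
    omega
  · have := hw size
    simp only [size] at this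
    omega
  · have h₁ := hw (active i true)
    have h₂ := hw (active i false)
    cases b <;>
      simp only [active, hv, Bool.not_false, Bool.not_true, Bool.false_eq_true,
        Bool.true_eq_false, and_true, and_false, and_self, ↓reduceIte, add_zero] at h₁ h₂ <;>
      omega

theorem Invariant.exists_descent (hd : ∀ i, 0 < d i) (hB : ∀ i, 2 * d i ≤ B)
    (hI : Invariant d N c) (hT : ¬ Terminal d c) :
    ∃ c', Reach (ofRules (Rule d)) c c' ∧ Invariant d N c' ∧ size ⬝ᵥ c' < size ⬝ᵥ c := by
  by_cases hh : ∃ i, 0 < heavy d i ⬝ᵥ c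
  · obtain ⟨i, hi⟩ := hh
    exact hI.exists_emit hd hi
  simp only [not_exists, not_lt, nonpos_iff_eq_zero] at hh
  obtain ⟨i, hi⟩ : ∃ i, 2 ≤ active i true ⬝ᵥ c + active i false ⬝ᵥ c := by
    by_contra! h
    exact hT fun i => ⟨hh i, by have := h i; omega⟩
  by_cases hboth : 0 < active i true ⬝ᵥ c ∧ 0 < active i false ⬝ᵥ c
  · exact hI.exists_merge (hB i) (hh i) hboth.1 hboth.2
  obtain ⟨b, hb⟩ : ∃ b, 2 ≤ active i b ⬝ᵥ c := by
    by_cases ht : 0 < active i true ⬝ᵥ c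
    · exact ⟨true, by omega⟩
    · exact ⟨false, by omega⟩
  obtain ⟨c₁, hcc₁, hI₁, hh₁, hsize₁, ht₁, hf₁⟩ := hI.exists_flip hd (hh i) hb
  obtain ⟨c₂, hc₁c₂, hI₂, hsize₂⟩ := hI₁.exists_merge (hB i) hh₁ ht₁ hf₁
  exact ⟨c₂, hcc₁.trans hc₁c₂, hI₂, hsize₁ ▸ hsize₂⟩

theorem Invariant.exists_terminal (hd : ∀ i, 0 < d i) (hB : ∀ i, 2 * d i ≤ B)
    (hI : Invariant d N c) : ∃ o, Reach (ofRules (Rule d)) c o ∧ Invariant d N o ∧ Terminal d o :=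
  Reach.exists_of_descent (size ⬝ᵥ ·) (fun _ hI hT => hI.exists_descent hd hB hT) hI

end FloorProtocol

theorem Rat.floor_mul_natCast_of_nonneg {q : ℚ} (hq : 0 ≤ q) (m : ℕ) :
    ⌊q * m⌋ = ((q.num.toNat * m / q.den : ℕ) : ℤ) := by
  have hnum : (q.num.toNat : ℚ) = q.num := by
    exact_mod_cast Int.toNat_of_nonneg (Rat.num_nonneg.mpr hq)
  have hq' : q * m = ((q.num.toNat * m : ℕ) : ℤ) / (q.den : ℚ) := by
    push_cast
    rw [hnum, mul_div_right_comm, Rat.num_div_den]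
  rw [hq', Rat.floor_intCast_div_natCast, Int.natCast_div]

/-- Every ℚ≥0-linear function `f(m) = Σᵢ ⌊cᵢ·m(i)⌋` (with `cᵢ ∈ ℚ`, `cᵢ ≥ 0`) is
stably `E`-approximated, with `E` the identity, by some function-approximating
leaderless population protocol: there are a finite state set `Λ`, a (symmetric)
transition function `δ`, distinct input states, an output state `y`, a quiescent
state `q ∉ Σ`, an approximation state `a ∉ Σ ∪ {y, q}`, a constant `a0` and a
linearly bounded `q0 : ℕ^{k+1} → ℕ` such that from every valid initial
configuration `i` (input counts `m`, `i(a) ≥ a0`, `i(q) ≥ q0(m, i(a))`, all other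
states absent), every reachable configuration can reach a stable configuration
`o` with `|o(y) − f(m)| ≤ i(a)`. -/
theorem stmt17 (k : ℕ) (c : Fin k → ℚ) (hc : ∀ i, 0 ≤ c i) :
    ∃ (Λ : Type) (_ : Fintype Λ) (δ : Λ × Λ → Λ × Λ)
      (inputs : Fin k → Λ) (y q a : Λ),
      PP.Symmetric δ ∧
      Function.Injective inputs ∧
      q ∉ Set.range inputs ∧
      a ∉ Set.range inputs ∧ a ≠ y ∧ a ≠ q ∧
      ∃ (a0 : ℕ) (q0 : (Fin k → ℕ) → ℕ → ℕ) (C : ℕ),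
        (∀ (m : Fin k → ℕ) (A : ℕ), q0 m A ≤ C * ((∑ i, m i) + A)) ∧
        ∀ (m : Fin k → ℕ) (init : Λ → ℕ),
          (∀ j, init (inputs j) = m j) →
          a0 ≤ init a →
          q0 m (init a) ≤ init q →
          (∀ s, s ∉ Set.range inputs → s ≠ q → s ≠ a → init s = 0) →
          ∀ cc : Λ → ℕ, PP.Reach δ init cc →
            ∃ oc : Λ → ℕ, PP.Reach δ cc oc ∧ PP.Stable δ y oc ∧
              |(oc y : ℤ) - ∑ i, ⌊c i * (m i : ℚ)⌋| ≤ (init a : ℤ) := by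
  open FloorProtocol in
  set d : Fin k → ℕ := fun i => (c i).den
  set n : Fin k → ℕ := fun i => (c i).num.toNat
  set B := ∑ i, (n i + 2 * d i)
  have hB (i : Fin k) : n i + 2 * d i ≤ B :=
    Finset.single_le_sum (f := fun i => n i + 2 * d i) (fun _ _ => Nat.zero_le _)
      (Finset.mem_univ i)
  have hd (i : Fin k) : 0 < d i := (c i).pos
  let inputs (j : Fin k) : State k B := .token j ⟨n j, by have := hB j; omega⟩ false
  refine ⟨State k B, inferInstance, PP.ofRules (Rule d), inputs, .output, .quiescent, .approx,
    PP.symmetric_ofRules (Rule.not_swap d), fun i j h => (State.token.inj h).1,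
    by simp [inputs], by simp [inputs], by simp, by simp,
    0, fun m _ => ∑ i, n i * m i, ∑ i, n i, fun m A => ?_,
    fun m init hin _ hq hzero cc hcc => ?_⟩
  · calc ∑ i, n i * m i ≤ ∑ i, n i * ∑ j, m j := by
          gcongr with i
          exact Finset.single_le_sum (fun _ _ => Nat.zero_le _) (Finset.mem_univ i)
      _ ≤ (∑ i, n i) * ((∑ i, m i) + A) := by
          rw [← Finset.sum_mul]
          exact Nat.mul_le_mul_left _ (Nat.le_add_right _ _)
  · obtain ⟨o, hco, hIo, hTo⟩ := ((Invariant.initial hin hzero hq).reach hcc).exists_terminal hd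
      (fun i => by have := hB i; omega)
    refine ⟨o, hco, hTo.stable, ?_⟩
    rw [hTo.output_eq hd hIo]
    simp [Rat.floor_mul_natCast_of_nonneg (hc _), d, n]
end
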